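/- arXiv:2602.23741 — 2 statements merged into one kernel-verified Lean document; each statement's English description precedes it below -/
import Mathlib

section
/- Let Z_1, Z_2 ∈ ℝ² with Z_1 ≠ Z_2 and d_1 ≥ d_2 ≥ 0, and let X be the set of global minimizers of the squared-distance-error objective O(W) = |‖W − Z_1‖² − d_1²| + |‖W − Z_2‖² − d_2²| on ℝ². Then X has exactly one element if and only if ‖Z_2 − Z_1‖ ≥ d_1 + d_2 or ‖Z_2 − Z_1‖ ≤ d_1 − d_2, and X has exactly two elements if and only if d_1 − d_2 < ‖Z_2 − Z_1‖ < d_1 + d_2. -/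
/-!
Write `A = ‖W - Z₁‖² - d₁²`, `B = ‖W - Z₂‖² - d₂²`, `ℓ = ‖Z₂ - Z₁‖` and
`P_c = Z₁ + c • (Z₂ - Z₁)`. For `c ≥ 1/2` the objective satisfies `c O ≥ (1 - c) A + c B`, and by
the weighted parallelogram law the right-hand side is `‖W - P_c‖²` plus a constant. If
`ℓ ≥ d₁ + d₂` or `ℓ ≤ d₁ - d₂`, then for `c = 1/2` (when `2 d₁ < ℓ`) or `c = d₁ / ℓ` (otherwise)
this bound is attained at `P_c`, which is therefore the unique minimizer. If
`d₁ - d₂ < ℓ < d₁ + d₂` the two circles meet, so the minimum value is `0` and the minimizers are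
their intersection points, of which there are exactly two in the plane.
-/

open AffineMap Module

section Minimizers

variable {α β : Type*} [LinearOrder β]

def globalMinimizers (f : α → β) : Set α := {x | ∀ y, f x ≤ f y}

theorem globalMinimizers_eq_singleton {f : α → β} {x : α} (h : ∀ y, y ≠ x → f x < f y) :
    globalMinimizers f = {x} := by
  ext y
  refine ⟨fun hy => by_contra fun hne => (h y hne).not_ge (hy x), ?_⟩
  rintro rfl z
  rcases eq_or_ne z y with rfl | hz
  · exact le_rfl
  · exact (h z hz).le

theorem globalMinimizers_eq_setOf_eq_zero {f : α → ℝ} (hf : ∀ x, 0 ≤ f x) {x₀ : α}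
    (hx₀ : f x₀ = 0) : globalMinimizers f = {x | f x = 0} := by
  ext x
  exact ⟨fun hx => le_antisymm (hx₀ ▸ hx x₀) (hf x), fun hx y => hx ▸ hf y⟩

end Minimizers

section Objective

variable {α : Type*} [PseudoMetricSpace α]

def sqDistError (Z₁ Z₂ : α) (d₁ d₂ : ℝ) (W : α) : ℝ :=
  |dist W Z₁ ^ 2 - d₁ ^ 2| + |dist W Z₂ ^ 2 - d₂ ^ 2|

theorem sqDistError_nonneg (Z₁ Z₂ : α) (d₁ d₂ : ℝ) (W : α) : 0 ≤ sqDistError Z₁ Z₂ d₁ d₂ W :=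
  add_nonneg (abs_nonneg _) (abs_nonneg _)

theorem sqDistError_eq_zero_iff {Z₁ Z₂ W : α} {d₁ d₂ : ℝ} (hd₁ : 0 ≤ d₁) (hd₂ : 0 ≤ d₂) :
    sqDistError Z₁ Z₂ d₁ d₂ W = 0 ↔ dist W Z₁ = d₁ ∧ dist W Z₂ = d₂ := by
  rw [sqDistError, add_eq_zero_iff_of_nonneg (abs_nonneg _) (abs_nonneg _), abs_eq_zero,
    abs_eq_zero, sub_eq_zero, sub_eq_zero, sq_eq_sq₀ dist_nonneg hd₁, sq_eq_sq₀ dist_nonneg hd₂]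

theorem combination_le_mul_sqDistError (Z₁ Z₂ : α) (d₁ d₂ : ℝ) {c : ℝ} (hc : 1 / 2 ≤ c) (W : α) :
    (1 - c) * (dist W Z₁ ^ 2 - d₁ ^ 2) + c * (dist W Z₂ ^ 2 - d₂ ^ 2) ≤
      c * sqDistError Z₁ Z₂ d₁ d₂ W := by
  have h₁ : (1 - c) * (dist W Z₁ ^ 2 - d₁ ^ 2) ≤ c * |dist W Z₁ ^ 2 - d₁ ^ 2| := by
    refine (le_abs_self _).trans ?_
    rw [abs_mul]
    exact mul_le_mul_of_nonneg_right (abs_le.2 ⟨by linarith, by linarith⟩) (abs_nonneg _)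
  have h₂ : c * (dist W Z₂ ^ 2 - d₂ ^ 2) ≤ c * |dist W Z₂ ^ 2 - d₂ ^ 2| :=
    mul_le_mul_of_nonneg_left (le_abs_self _) (by linarith)
  rw [sqDistError, mul_add]
  linarith

end Objective

theorem dist_sq_lineMap {F : Type*} [SeminormedAddCommGroup F] [NormedSpace ℝ F] (Z₁ Z₂ : F) (c : ℝ) :
    dist (lineMap Z₁ Z₂ c) Z₁ ^ 2 = c ^ 2 * dist Z₁ Z₂ ^ 2 ∧
      dist (lineMap Z₁ Z₂ c) Z₂ ^ 2 = (1 - c) ^ 2 * dist Z₁ Z₂ ^ 2 := by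
  rw [dist_lineMap_left, dist_lineMap_right, Real.norm_eq_abs, Real.norm_eq_abs, mul_pow,
    mul_pow, sq_abs, sq_abs]
  exact ⟨rfl, rfl⟩

section InnerProductSpace

variable {E : Type*} [NormedAddCommGroup E] [InnerProductSpace ℝ E]

theorem one_sub_mul_dist_sq_add_mul_dist_sq (Z₁ Z₂ W : E) (c : ℝ) :
    (1 - c) * dist W Z₁ ^ 2 + c * dist W Z₂ ^ 2 =
      dist W (lineMap Z₁ Z₂ c) ^ 2 + c * (1 - c) * dist Z₁ Z₂ ^ 2 := by
  have h₂ : W - Z₂ = (W - Z₁) - (Z₂ - Z₁) := by abel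
  have hP : W - lineMap Z₁ Z₂ c = (W - Z₁) - c • (Z₂ - Z₁) := by
    rw [lineMap_apply_module']; abel
  rw [dist_eq_norm, dist_eq_norm, dist_eq_norm, dist_eq_norm', h₂, hP]
  generalize W - Z₁ = u
  generalize Z₂ - Z₁ = a
  rw [norm_sub_sq_real, norm_sub_sq_real, norm_smul, inner_smul_right, Real.norm_eq_abs, mul_pow,
    sq_abs]
  ring

theorem dist_add_sq_of_inner_eq_zero {p q v : E} (h : inner ℝ (q - p) v = 0) :
    dist (q + v) p ^ 2 = dist q p ^ 2 + ‖v‖ ^ 2 := by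
  rw [dist_eq_norm, dist_eq_norm, add_sub_right_comm, norm_add_sq_real, h]
  ring

theorem exists_norm_eq_one_inner_eq_zero [FiniteDimensional ℝ E] (hE : 2 ≤ finrank ℝ E) (a : E) :
    ∃ v : E, ‖v‖ = 1 ∧ inner ℝ a v = 0 := by
  have hK : (ℝ ∙ a)ᗮ ≠ ⊥ := by
    intro hbot
    have h₁ : finrank ℝ (ℝ ∙ a) ≤ 1 := by
      simpa using finrank_span_le_card ({a} : Set E)
    have := (ℝ ∙ a).finrank_add_finrank_orthogonal
    rw [hbot, finrank_bot] at this
    omega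
  obtain ⟨v, hv, hv₀⟩ := Submodule.exists_mem_ne_zero_of_ne_bot hK
  refine ⟨‖v‖⁻¹ • v, norm_smul_inv_norm hv₀, ?_⟩
  rw [inner_smul_right, Submodule.mem_orthogonal_singleton_iff_inner_right.1 hv, mul_zero]

theorem globalMinimizers_sqDistError_eq_singleton {Z₁ Z₂ : E} {d₁ d₂ c : ℝ} (hc : 1 / 2 ≤ c)
    (hP : c * sqDistError Z₁ Z₂ d₁ d₂ (lineMap Z₁ Z₂ c) =
      (1 - c) * (dist (lineMap Z₁ Z₂ c) Z₁ ^ 2 - d₁ ^ 2) +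
        c * (dist (lineMap Z₁ Z₂ c) Z₂ ^ 2 - d₂ ^ 2)) :
    globalMinimizers (sqDistError Z₁ Z₂ d₁ d₂) = {lineMap Z₁ Z₂ c} := by
  set P := lineMap Z₁ Z₂ c
  refine globalMinimizers_eq_singleton fun W hW => ?_
  have hgrowth : c * sqDistError Z₁ Z₂ d₁ d₂ P + dist W P ^ 2 ≤ c * sqDistError Z₁ Z₂ d₁ d₂ W := by
    have hW := one_sub_mul_dist_sq_add_mul_dist_sq Z₁ Z₂ W c
    have hP' := one_sub_mul_dist_sq_add_mul_dist_sq Z₁ Z₂ P c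
    rw [dist_self] at hP'
    linarith [combination_le_mul_sqDistError Z₁ Z₂ d₁ d₂ hc W]
  have hWP : 0 < dist W P ^ 2 := pow_pos (dist_pos.2 hW) 2
  exact lt_of_mul_lt_mul_left (by linarith) (by linarith : (0 : ℝ) ≤ c)

theorem encard_globalMinimizers_sqDistError_eq_one {Z₁ Z₂ : E} {d₁ d₂ : ℝ} (hZ : Z₁ ≠ Z₂)
    (hd₂ : 0 ≤ d₂) (hd : d₂ ≤ d₁) (h : d₁ + d₂ ≤ dist Z₁ Z₂ ∨ dist Z₁ Z₂ ≤ d₁ - d₂) :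
    (globalMinimizers (sqDistError Z₁ Z₂ d₁ d₂)).encard = 1 := by
  set ℓ := dist Z₁ Z₂
  have hℓ : 0 < ℓ := dist_pos.2 hZ
  suffices ∃ c, 1 / 2 ≤ c ∧ c * sqDistError Z₁ Z₂ d₁ d₂ (lineMap Z₁ Z₂ c) =
      (1 - c) * (dist (lineMap Z₁ Z₂ c) Z₁ ^ 2 - d₁ ^ 2) +
        c * (dist (lineMap Z₁ Z₂ c) Z₂ ^ 2 - d₂ ^ 2) by
    obtain ⟨c, hc, hP⟩ := this
    rw [globalMinimizers_sqDistError_eq_singleton hc hP, Set.encard_singleton]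
  rcases lt_or_ge (2 * d₁) ℓ with hfar | hnear
  · refine ⟨1 / 2, le_rfl, ?_⟩
    obtain ⟨h₁, h₂⟩ := dist_sq_lineMap Z₁ Z₂ (1 / 2)
    rw [sqDistError, h₁, h₂, abs_of_nonneg (by nlinarith), abs_of_nonneg (by nlinarith)]
    ring
  · have hd₁ : 0 < d₁ := by linarith
    refine ⟨d₁ / ℓ, by rw [le_div_iff₀ hℓ]; linarith, ?_⟩
    obtain ⟨h₁, h₂⟩ := dist_sq_lineMap Z₁ Z₂ (d₁ / ℓ)
    have h₁' : (d₁ / ℓ) ^ 2 * ℓ ^ 2 = d₁ ^ 2 := by field_simp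
    have h₂' : (1 - d₁ / ℓ) ^ 2 * ℓ ^ 2 = (ℓ - d₁) ^ 2 := by field_simp
    have hfar₂ : d₂ ^ 2 ≤ (ℓ - d₁) ^ 2 := by rcases h with h | h <;> nlinarith
    rw [sqDistError, h₁, h₂, h₁', h₂', sub_self, abs_zero, abs_of_nonneg (by linarith)]
    ring

theorem dist_sq_lineMap_add_smul {Z₁ Z₂ v : E} (hv : ‖v‖ = 1) (hZv : inner ℝ (Z₂ - Z₁) v = 0)
    (c s : ℝ) :
    dist (lineMap Z₁ Z₂ c + s • v) Z₁ ^ 2 = c ^ 2 * dist Z₁ Z₂ ^ 2 + s ^ 2 ∧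
      dist (lineMap Z₁ Z₂ c + s • v) Z₂ ^ 2 = (1 - c) ^ 2 * dist Z₁ Z₂ ^ 2 + s ^ 2 := by
  have h₁ : inner ℝ (lineMap Z₁ Z₂ c - Z₁) (s • v) = 0 := by
    rw [← vsub_eq_sub, lineMap_vsub_left, real_inner_smul_left, inner_smul_right, vsub_eq_sub,
      hZv, mul_zero, mul_zero]
  have h₂ : inner ℝ (lineMap Z₁ Z₂ c - Z₂) (s • v) = 0 := by
    rw [← vsub_eq_sub, lineMap_vsub_right, real_inner_smul_left, inner_smul_right, vsub_eq_sub,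
      ← neg_sub Z₂ Z₁, inner_neg_left, hZv, neg_zero, mul_zero, mul_zero]
  have hsv : ‖s • v‖ ^ 2 = s ^ 2 := by rw [norm_smul, hv, mul_one, Real.norm_eq_abs, sq_abs]
  obtain ⟨hP₁, hP₂⟩ := dist_sq_lineMap Z₁ Z₂ c
  rw [dist_add_sq_of_inner_eq_zero h₁, dist_add_sq_of_inner_eq_zero h₂, hsv, hP₁, hP₂]
  exact ⟨rfl, rfl⟩

theorem exists_ne_dist_eq_dist_eq [FiniteDimensional ℝ E] (hE : 2 ≤ finrank ℝ E) {Z₁ Z₂ : E}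
    {d₁ d₂ : ℝ} (h₁ : |d₁ - d₂| < dist Z₁ Z₂) (h₂ : dist Z₁ Z₂ < d₁ + d₂) :
    ∃ W₁ W₂ : E, W₁ ≠ W₂ ∧ dist W₁ Z₁ = d₁ ∧ dist W₁ Z₂ = d₂ ∧
      dist W₂ Z₁ = d₁ ∧ dist W₂ Z₂ = d₂ := by
  set ℓ := dist Z₁ Z₂
  obtain ⟨hlt, hgt⟩ := abs_sub_lt_iff.1 h₁
  have hℓ : 0 < ℓ := (abs_nonneg _).trans_lt h₁
  obtain ⟨v, hv, hZv⟩ := exists_norm_eq_one_inner_eq_zero hE (Z₂ - Z₁)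
  -- `lineMap Z₁ Z₂ c` is where the common chord of the two circles crosses the line `Z₁Z₂`.
  set c := (ℓ ^ 2 + d₁ ^ 2 - d₂ ^ 2) / (2 * ℓ ^ 2)
  have hr : 0 < d₁ ^ 2 - c ^ 2 * ℓ ^ 2 := by
    have : 4 * ℓ ^ 2 * (d₁ ^ 2 - c ^ 2 * ℓ ^ 2) =
        ((d₁ + d₂) ^ 2 - ℓ ^ 2) * (ℓ ^ 2 - (d₁ - d₂) ^ 2) := by
      simp only [c]; field_simp; ring
    have hpos : 0 < ((d₁ + d₂) ^ 2 - ℓ ^ 2) * (ℓ ^ 2 - (d₁ - d₂) ^ 2) :=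
      mul_pos (by nlinarith) (by nlinarith)
    nlinarith
  have hon : ∀ s : ℝ, s ^ 2 = d₁ ^ 2 - c ^ 2 * ℓ ^ 2 →
      dist (lineMap Z₁ Z₂ c + s • v) Z₁ = d₁ ∧ dist (lineMap Z₁ Z₂ c + s • v) Z₂ = d₂ := by
    intro s hs
    obtain ⟨hW₁, hW₂⟩ := dist_sq_lineMap_add_smul hv hZv c s
    constructor
    · rw [← sq_eq_sq₀ dist_nonneg (by linarith), hW₁, hs]
      ring
    · rw [← sq_eq_sq₀ dist_nonneg (by linarith), hW₂, hs]
      simp only [c]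
      field_simp
      ring
  set r := √(d₁ ^ 2 - c ^ 2 * ℓ ^ 2)
  have hr₀ : r ≠ 0 := (Real.sqrt_pos.2 hr).ne'
  have hrsq : r ^ 2 = d₁ ^ 2 - c ^ 2 * ℓ ^ 2 := Real.sq_sqrt hr.le
  obtain ⟨hp₁, hp₂⟩ := hon r hrsq
  obtain ⟨hm₁, hm₂⟩ := hon (-r) (by rw [neg_sq, hrsq])
  refine ⟨_, _, fun heq => hr₀ ?_, hp₁, hp₂, hm₁, hm₂⟩
  have hv₀ : v ≠ 0 := norm_ne_zero_iff.1 (by rw [hv]; exact one_ne_zero)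
  have := smul_left_injective ℝ hv₀ (add_left_cancel heq)
  linarith

theorem encard_globalMinimizers_sqDistError_eq_two [FiniteDimensional ℝ E] (hE : finrank ℝ E = 2)
    {Z₁ Z₂ : E} {d₁ d₂ : ℝ} (h₁ : |d₁ - d₂| < dist Z₁ Z₂) (h₂ : dist Z₁ Z₂ < d₁ + d₂) :
    (globalMinimizers (sqDistError Z₁ Z₂ d₁ d₂)).encard = 2 := by
  obtain ⟨hlt, hgt⟩ := abs_sub_lt_iff.1 h₁
  have hd₁ : 0 ≤ d₁ := by linarith
  have hd₂ : 0 ≤ d₂ := by linarith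
  have hZ : Z₁ ≠ Z₂ := dist_pos.1 ((abs_nonneg _).trans_lt h₁)
  obtain ⟨W₁, W₂, hne, h₁₁, h₁₂, h₂₁, h₂₂⟩ := exists_ne_dist_eq_dist_eq hE.ge h₁ h₂
  rw [globalMinimizers_eq_setOf_eq_zero (sqDistError_nonneg Z₁ Z₂ d₁ d₂)
    ((sqDistError_eq_zero_iff hd₁ hd₂).2 ⟨h₁₁, h₁₂⟩), ← Set.encard_pair hne]
  congr 1
  ext W
  simp only [Set.mem_ofPred_eq, sqDistError_eq_zero_iff hd₁ hd₂, Set.mem_insert_iff,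
    Set.mem_singleton_iff]
  constructor
  · rintro ⟨hW₁, hW₂⟩
    exact EuclideanGeometry.eq_of_dist_eq_of_dist_eq_of_finrank_eq_two hE hZ hne h₁₁ h₂₁ hW₁
      h₁₂ h₂₂ hW₂
  · rintro (rfl | rfl)
    exacts [⟨h₁₁, h₁₂⟩, ⟨h₂₁, h₂₂⟩]

end InnerProductSpace

/-- Two measurements, squared distance error, two dimensions: the solution set `X` has
exactly one element iff `‖Z₂ - Z₁‖ ≥ d₁ + d₂` or `‖Z₂ - Z₁‖ ≤ d₁ - d₂`, and exactly
two elements iff `d₁ - d₂ < ‖Z₂ - Z₁‖ < d₁ + d₂`. -/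
theorem two_meas_squared_error_count_2D
    (Z₁ Z₂ : EuclideanSpace ℝ (Fin 2)) (hZ : Z₁ ≠ Z₂)
    (d₁ d₂ : ℝ) (hd₂ : 0 ≤ d₂) (hd : d₂ ≤ d₁)
    (O : EuclideanSpace ℝ (Fin 2) → ℝ)
    (hO : ∀ W, O W = |‖W - Z₁‖ ^ 2 - d₁ ^ 2| + |‖W - Z₂‖ ^ 2 - d₂ ^ 2|)
    (X : Set (EuclideanSpace ℝ (Fin 2)))
    (hX : X = {W | ∀ V, O W ≤ O V}) :
    (X.encard = 1 ↔ (d₁ + d₂ ≤ ‖Z₂ - Z₁‖ ∨ ‖Z₂ - Z₁‖ ≤ d₁ - d₂)) ∧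
    (X.encard = 2 ↔ (d₁ - d₂ < ‖Z₂ - Z₁‖ ∧ ‖Z₂ - Z₁‖ < d₁ + d₂)) := by
  have hO' : O = sqDistError Z₁ Z₂ d₁ d₂ :=
    funext fun W => by rw [hO, sqDistError, dist_eq_norm, dist_eq_norm]
  have hX' : X = globalMinimizers (sqDistError Z₁ Z₂ d₁ d₂) := by rw [hX, hO']; rfl
  rw [hX', ← dist_eq_norm']
  by_cases h : d₁ + d₂ ≤ dist Z₁ Z₂ ∨ dist Z₁ Z₂ ≤ d₁ - d₂
  · rw [encard_globalMinimizers_sqDistError_eq_one hZ hd₂ hd h]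
    refine ⟨iff_of_true rfl h, iff_of_false (by decide) ?_⟩
    rintro ⟨h₁, h₂⟩
    rcases h with h | h <;> linarith
  · push Not at h
    have h₁ : |d₁ - d₂| < dist Z₁ Z₂ := abs_sub_lt_iff.2 ⟨h.2, by linarith⟩
    rw [encard_globalMinimizers_sqDistError_eq_two finrank_euclideanSpace_fin h₁ h.1]
    exact ⟨iff_of_false (by decide) (by rintro (h' | h') <;> linarith), iff_of_true rfl ⟨h.2, h.1⟩⟩
end

section
/- Let n = 2 or n = 3, let Z_1, Z_2 ∈ ℝ^n with Z_1 ≠ Z_2, and let d_1 ≥ d_2 ≥ 0. If d_1 − d_2 ≥ ‖Z_2 − Z_1‖, then the set of global minimizers of the distance-error objective O(W) = |‖W − Z_1‖ − d_1| + |‖W − Z_2‖ − d_2| is exactly the closed segment joining N_{−2} = Z_2 + d_2 (Z_2 − Z_1)/‖Z_2 − Z_1‖ and N_1 = Z_1 + d_1 (Z_2 − Z_1)/‖Z_2 − Z_1‖. -/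
/-!
Since `W - Z₁ = (W - Z₂) + (Z₂ - Z₁)`, the triangle inequality together with `|x| ≥ ±x` gives
`O(W) ≥ (d₁ - ‖W - Z₁‖) + (‖W - Z₂‖ - d₂) ≥ d₁ - d₂ - ‖Z₂ - Z₁‖`. Equality in the triangle
inequality of a strictly convex space forces `W = Z₂ + s (Z₂ - Z₁)` with `s ≥ 0`, and on that ray
the two remaining equality conditions `‖W - Z₁‖ ≤ d₁`, `d₂ ≤ ‖W - Z₂‖` read
`d₂ / ‖Z₂ - Z₁‖ ≤ s ≤ d₁ / ‖Z₂ - Z₁‖ - 1`, which is the segment `[N₋₂, N₁]`; it is nonempty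
exactly when `‖Z₂ - Z₁‖ ≤ d₁ - d₂`, so the lower bound is the minimum.
-/

open Set

lemma forall_le_iff_eq_of_isLeast_range {α β : Type*} [PartialOrder β] {f : α → β} {m : β}
    (hm : IsLeast (range f) m) (x : α) : (∀ y, f x ≤ f y) ↔ f x = m := by
  obtain ⟨⟨x₀, rfl⟩, hle⟩ := hm
  exact ⟨fun h => le_antisymm (h x₀) (hle ⟨x, rfl⟩), fun h y => h ▸ hle ⟨y, rfl⟩⟩

lemma abs_sub_add_abs_sub_eq_iff {a b r d₁ d₂ : ℝ} (h : a ≤ b + r) :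
    |a - d₁| + |b - d₂| = d₁ - d₂ - r ↔ a ≤ d₁ ∧ d₂ ≤ b ∧ a = b + r := by
  constructor
  · intro heq
    have := le_abs_self (a - d₁)
    have := neg_abs_le (a - d₁)
    have := le_abs_self (b - d₂)
    have := neg_abs_le (b - d₂)
    refine ⟨?_, ?_, ?_⟩ <;> linarith
  · rintro ⟨ha, hb, rfl⟩
    rw [abs_of_nonpos (by linarith), abs_of_nonneg (by linarith)]
    ring

section DistanceError

variable {E : Type*} [NormedAddCommGroup E]

noncomputable def distanceError (Z₁ Z₂ : E) (d₁ d₂ : ℝ) (W : E) : ℝ :=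
  |‖W - Z₁‖ - d₁| + |‖W - Z₂‖ - d₂|

lemma sub_sub_norm_sub_le_distanceError (Z₁ Z₂ : E) (d₁ d₂ : ℝ) (W : E) :
    d₁ - d₂ - ‖Z₂ - Z₁‖ ≤ distanceError Z₁ Z₂ d₁ d₂ W := by
  have := norm_sub_le_norm_sub_add_norm_sub W Z₂ Z₁
  have := neg_abs_le (‖W - Z₁‖ - d₁)
  have := le_abs_self (‖W - Z₂‖ - d₂)
  rw [distanceError]
  linarith

lemma norm_sub_eq_norm_sub_add_norm_sub_iff [NormedSpace ℝ E] [StrictConvexSpace ℝ E]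
    {Z₁ Z₂ W : E} (hZ : Z₁ ≠ Z₂) :
    ‖W - Z₁‖ = ‖W - Z₂‖ + ‖Z₂ - Z₁‖ ↔ ∃ s : ℝ, 0 ≤ s ∧ W = Z₂ + s • (Z₂ - Z₁) := by
  rw [← sub_add_sub_cancel W Z₂ Z₁, ← sameRay_iff_norm_add,
    ← exists_nonneg_right_iff_sameRay (sub_ne_zero.2 hZ.symm)]
  simp only [sub_eq_iff_eq_add']

lemma distanceError_eq_iff [NormedSpace ℝ E] [StrictConvexSpace ℝ E] {Z₁ Z₂ : E}
    (hZ : Z₁ ≠ Z₂) {d₁ d₂ : ℝ} (hd₂ : 0 ≤ d₂) (W : E) :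
    distanceError Z₁ Z₂ d₁ d₂ W = d₁ - d₂ - ‖Z₂ - Z₁‖ ↔
      ∃ s ∈ Icc (d₂ / ‖Z₂ - Z₁‖) (d₁ / ‖Z₂ - Z₁‖ - 1), Z₂ + s • (Z₂ - Z₁) = W := by
  have hr : 0 < ‖Z₂ - Z₁‖ := norm_pos_iff.2 (sub_ne_zero.2 hZ.symm)
  have hnorm₁ (s : ℝ) (hs : 0 ≤ s) : ‖Z₂ + s • (Z₂ - Z₁) - Z₁‖ = (s + 1) * ‖Z₂ - Z₁‖ := by
    rw [show Z₂ + s • (Z₂ - Z₁) - Z₁ = (s + 1) • (Z₂ - Z₁) by module, norm_smul,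
      Real.norm_of_nonneg (by linarith)]
  have hnorm₂ (s : ℝ) (hs : 0 ≤ s) : ‖Z₂ + s • (Z₂ - Z₁) - Z₂‖ = s * ‖Z₂ - Z₁‖ := by
    rw [add_sub_cancel_left, norm_smul, Real.norm_of_nonneg hs]
  rw [distanceError, abs_sub_add_abs_sub_eq_iff (norm_sub_le_norm_sub_add_norm_sub W Z₂ Z₁),
    norm_sub_eq_norm_sub_add_norm_sub_iff hZ]
  simp only [mem_Icc, le_div_iff₀ hr, le_sub_iff_add_le, div_le_iff₀ hr]
  constructor
  · rintro ⟨h₁, h₂, s, hs, rfl⟩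
    rw [hnorm₁ s hs] at h₁
    rw [hnorm₂ s hs] at h₂
    exact ⟨s, ⟨h₂, h₁⟩, rfl⟩
  · rintro ⟨s, ⟨h₂, h₁⟩, rfl⟩
    have hs : 0 ≤ s := nonneg_of_mul_nonneg_left (hd₂.trans h₂) hr
    exact ⟨(hnorm₁ s hs).trans_le h₁, h₂.trans_eq (hnorm₂ s hs).symm, s, hs, rfl⟩

end DistanceError

lemma segment_add_smul_eq_image_Icc {E : Type*} [AddCommGroup E] [Module ℝ E] (Z v : E)
    {a b : ℝ} (hab : a ≤ b) :
    segment ℝ (Z + a • v) (Z + b • v) = (fun s : ℝ => Z + s • v) '' Icc a b := by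
  have hline : (AffineMap.lineMap Z (Z + v) : ℝ → E) = fun s => Z + s • v := by
    funext s
    rw [AffineMap.lineMap_apply_module', add_sub_cancel_left, add_comm]
  rw [← segment_eq_Icc hab, ← hline, image_segment]
  simp only [hline]

theorem two_meas_distance_error_case_c_general
    (n : ℕ) (Z₁ Z₂ : EuclideanSpace ℝ (Fin n)) (hZ : Z₁ ≠ Z₂)
    (d₁ d₂ : ℝ) (hd₂ : 0 ≤ d₂)
    (O : EuclideanSpace ℝ (Fin n) → ℝ)
    (hO : ∀ W, O W = |‖W - Z₁‖ - d₁| + |‖W - Z₂‖ - d₂|)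
    (hcase : ‖Z₂ - Z₁‖ ≤ d₁ - d₂) :
    {W : EuclideanSpace ℝ (Fin n) | ∀ V, O W ≤ O V}
      = segment ℝ (Z₂ + (d₂ / ‖Z₂ - Z₁‖) • (Z₂ - Z₁))
          (Z₁ + (d₁ / ‖Z₂ - Z₁‖) • (Z₂ - Z₁)) := by
  obtain rfl : O = distanceError Z₁ Z₂ d₁ d₂ := funext hO
  have hr : 0 < ‖Z₂ - Z₁‖ := norm_pos_iff.2 (sub_ne_zero.2 hZ.symm)
  have hN₁ : Z₁ + (d₁ / ‖Z₂ - Z₁‖) • (Z₂ - Z₁) = Z₂ + (d₁ / ‖Z₂ - Z₁‖ - 1) • (Z₂ - Z₁) := by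
    module
  have hle : d₂ / ‖Z₂ - Z₁‖ ≤ d₁ / ‖Z₂ - Z₁‖ - 1 := by
    rw [div_sub_one hr.ne', div_le_div_iff_of_pos_right hr]
    linarith
  have hleast : IsLeast (range (distanceError Z₁ Z₂ d₁ d₂)) (d₁ - d₂ - ‖Z₂ - Z₁‖) :=
    ⟨⟨_, (distanceError_eq_iff hZ hd₂ _).2 ⟨_, left_mem_Icc.2 hle, rfl⟩⟩,
      forall_mem_range.2 (sub_sub_norm_sub_le_distanceError Z₁ Z₂ d₁ d₂)⟩
  ext W
  rw [mem_ofPred_eq, hN₁, segment_add_smul_eq_image_Icc _ _ hle, mem_image,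
    forall_le_iff_eq_of_isLeast_range hleast, distanceError_eq_iff hZ hd₂]

/-- Two measurements, distance error, case (c): if `d₁ - d₂ ≥ ‖Z₂ - Z₁‖`, then the set
of global minimizers of `O(W) = |‖W - Z₁‖ - d₁| + |‖W - Z₂‖ - d₂|` is exactly the
closed segment joining `N₋₂ = Z₂ + d₂ (Z₂ - Z₁)/‖Z₂ - Z₁‖` and
`N₁ = Z₁ + d₁ (Z₂ - Z₁)/‖Z₂ - Z₁‖`. -/
theorem two_meas_distance_error_case_c
    (n : ℕ) (hn : n = 2 ∨ n = 3)
    (Z₁ Z₂ : EuclideanSpace ℝ (Fin n)) (hZ : Z₁ ≠ Z₂)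
    (d₁ d₂ : ℝ) (hd₂ : 0 ≤ d₂) (hd : d₂ ≤ d₁)
    (O : EuclideanSpace ℝ (Fin n) → ℝ)
    (hO : ∀ W, O W = |‖W - Z₁‖ - d₁| + |‖W - Z₂‖ - d₂|)
    (hcase : ‖Z₂ - Z₁‖ ≤ d₁ - d₂) :
    {W : EuclideanSpace ℝ (Fin n) | ∀ V, O W ≤ O V}
      = segment ℝ (Z₂ + (d₂ / ‖Z₂ - Z₁‖) • (Z₂ - Z₁))
          (Z₁ + (d₁ / ‖Z₂ - Z₁‖) • (Z₂ - Z₁)) :=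
  two_meas_distance_error_case_c_general n Z₁ Z₂ hZ d₁ d₂ hd₂ O hO hcase
end
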